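/- Let (M, Σ_M, μ_M) be a measure space, h : M → N strongly measurable, and suppose (N, d_N) is a complete geodesic metric space that is globally nonpositively curved (NPC): for every constant speed geodesic γ : [0,1] → N, every z ∈ N and every t ∈ [0,1], d_N(z, γ(t))² ≤ (1−t) d_N(z, γ(0))² + t d_N(z, γ(1))² − (1−t)t d_N(γ(0), γ(1))². Then (L²_h(M,N), D₂) is a complete geodesic space that is globally NPC: for every constant speed geodesic c : [0,1] → L²_h(M,N), every F ∈ L²_h(M,N) and every t ∈ [0,1], D₂(F, c(t))² ≤ (1−t) D₂(F, c(0))² + t D₂(F, c(1))² − (1−t)t D₂(c(0), c(1))². (No separability of N is required in the NPC case.) -/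

import Mathlib

/-!
Completeness is the Riesz–Fischer argument: if `D_p(u n, u m) < 2⁻ᴺ` for `n, m ≥ N`, the
consecutive distances `d(u n x, u (n+1) x)` are summable for a.e. `x`, so `u n` converges a.e. to a
strongly measurable limit, and Fatou's lemma bounds its `D_p`-distance to `u n` by `2⁻ⁿ`.

In `N` the NPC inequality makes the distance convex along pairs of geodesics,
`d(γ t, σ t) ≤ (1 - t) d(γ 0, σ 0) + t d(γ 1, σ 1)`, so a choice of geodesics depends continuously
on the endpoints. Applied pointwise to `F, F'` it gives a strongly measurable curve which is a
constant speed geodesic for `D_p`, and integrating the pointwise NPC inequality gives the NPC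
inequality along it in `L²`. That inequality in turn forces every geodesic of `L²` with the same
endpoints to lie at distance `0` from this one.
-/

set_option linter.unusedSectionVars false

open MeasureTheory ENNReal Set Filter Topology TopologicalSpace

noncomputable section

namespace NLS

variable {α : Type*} [MeasurableSpace α] {N : Type*} [MetricSpace N]
  [MeasurableSpace N] [BorelSpace N]

/-- "Strongly measurable": Borel measurable with separable range. -/
def SM (f : α → N) : Prop :=
  Measurable f ∧ TopologicalSpace.IsSeparable (Set.range f)

theorem SM.aesm {f : α → N} (hf : SM f) (μ : Measure α) :
    AEStronglyMeasurable f μ :=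
  (stronglyMeasurable_iff_measurable_separable.2 ⟨hf.1, hf.2⟩).aestronglyMeasurable

/-- The `L^p` (extended) distance between two maps with values in a metric space;
for `p < ∞` it is `(∫ d(f x, g x)^p dμ)^{1/p}` and for `p = ∞` the essential supremum
of `x ↦ d(f x, g x)`. -/
def Dp (μ : Measure α) (p : ℝ≥0∞) (f g : α → N) : ℝ≥0∞ :=
  eLpNorm (fun x => dist (f x) (g x)) p μ

theorem Dp_self (μ : Measure α) (p : ℝ≥0∞) (f : α → N) : Dp μ p f f = 0 := by
  unfold Dp
  simp only [dist_self]
  exact eLpNorm_zero'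

theorem Dp_comm (μ : Measure α) (p : ℝ≥0∞) (f g : α → N) : Dp μ p f g = Dp μ p g f := by
  unfold Dp
  simp only [dist_comm]

theorem Dp_triangle {μ : Measure α} {p : ℝ≥0∞} (hp : 1 ≤ p) {f g k : α → N}
    (hf : AEStronglyMeasurable f μ) (hg : AEStronglyMeasurable g μ)
    (hk : AEStronglyMeasurable k μ) :
    Dp μ p f k ≤ Dp μ p f g + Dp μ p g k := by
  have h1 : Dp μ p f k ≤
      eLpNorm ((fun x => dist (f x) (g x)) + fun x => dist (g x) (k x)) p μ := by
    refine eLpNorm_mono fun x => ?_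
    simp only [Pi.add_apply, Real.norm_eq_abs]
    rw [abs_of_nonneg dist_nonneg]
    exact (dist_triangle (f x) (g x) (k x)).trans (le_abs_self _)
  exact h1.trans (eLpNorm_add_le (hf.dist hg) (hg.dist hk) hp)

/-- The nonlinear Lebesgue space `L^p_h(α, N)` with base map `h`, presented by
representatives: Borel measurable, separably valued maps at finite `D_p`-distance
from `h`.  Two representatives at `D_p`-distance `0` (equivalently, `μ`-a.e. equal)
represent the same element of the quotient nonlinear Lebesgue space; accordingly the
canonical structure below is a pseudometric space whose metric (separation) quotient is
the actual nonlinear Lebesgue space.  All topological and Borel-measurability notions for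
the quotient correspond exactly to those of this pseudometric space. -/
def NLp (μ : Measure α) (h : α → N) (_hh : SM h) (p : ℝ≥0∞) : Type _ :=
  {f : α → N // SM f ∧ Dp μ p f h ≠ ∞}

namespace NLp

variable {μ : Measure α} {h : α → N} {hh : SM h} {p : ℝ≥0∞}

def pem (μ : Measure α) (h : α → N) (hh : SM h) (p : ℝ≥0∞) (hp : 1 ≤ p) :
    PseudoEMetricSpace (NLp μ h hh p) where
  edist f g := Dp μ p f.1 g.1
  edist_self f := Dp_self μ p f.1
  edist_comm f g := Dp_comm μ p f.1 g.1
  edist_triangle f g k := Dp_triangle hp (f.2.1.aesm μ) (g.2.1.aesm μ) (k.2.1.aesm μ)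

theorem dp_ne_top (hp : 1 ≤ p) (f g : NLp μ h hh p) : Dp μ p f.1 g.1 ≠ ∞ := by
  have htri := Dp_triangle hp (f.2.1.aesm μ) (hh.aesm μ) (g.2.1.aesm μ)
  have h2 : Dp μ p h g.1 ≠ ∞ := by rw [Dp_comm]; exact g.2.2
  exact ne_top_of_le_ne_top (ENNReal.add_ne_top.2 ⟨f.2.2, h2⟩) htri

/-- The `D_p` pseudometric on the nonlinear Lebesgue space. -/
instance [hp : Fact (1 ≤ p)] : PseudoMetricSpace (NLp μ h hh p) :=
  @PseudoEMetricSpace.toPseudoMetricSpace _ (pem μ h hh p hp.out)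
    (fun f g => dp_ne_top hp.out f g)

instance [Fact (1 ≤ p)] : MeasurableSpace (NLp μ h hh p) := borel _
instance [Fact (1 ≤ p)] : BorelSpace (NLp μ h hh p) := ⟨rfl⟩

theorem edist_def [Fact (1 ≤ p)] (f g : NLp μ h hh p) :
    edist f g = Dp μ p f.1 g.1 := rfl

theorem dist_def [Fact (1 ≤ p)] (f g : NLp μ h hh p) :
    dist f g = (Dp μ p f.1 g.1).toReal := rfl

end NLp

/-- Absolutely continuous curves: `c ∈ AC^p([a,b], X)`. -/
def MemACp {X : Type*} [PseudoMetricSpace X] (p : ℝ≥0∞) (a b : ℝ) (c : ℝ → X) : Prop :=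
  ∃ m : ℝ → ℝ, MemLp m p (volume.restrict (Set.Icc a b)) ∧
    ∀ s t : ℝ, a ≤ s → s ≤ t → t ≤ b → dist (c s) (c t) ≤ ∫ r in s..t, m r

/-- The metric derivative of a curve at `t` (limit of difference quotients within `[a,b]`). -/
def mder {X : Type*} [PseudoMetricSpace X] (a b : ℝ) (c : ℝ → X) (t : ℝ) : ℝ :=
  limUnder (𝓝[Set.Icc a b \ {t}] t) fun s => dist (c s) (c t) / |s - t|

instance : Fact ((1 : ℝ≥0∞) ≤ 2) := ⟨one_le_two⟩

section Geometry

variable {Y : Type*} [PseudoMetricSpace Y]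

def IsConstSpeedGeodesic (γ : ℝ → Y) : Prop :=
  ∀ s ∈ Icc (0:ℝ) 1, ∀ t ∈ Icc (0:ℝ) 1, dist (γ s) (γ t) = |s - t| * dist (γ 0) (γ 1)

variable (Y) in
def IsGeodesicSpace : Prop :=
  ∀ y y' : Y, ∃ γ : ℝ → Y, γ 0 = y ∧ γ 1 = y' ∧ IsConstSpeedGeodesic γ

def NPCComparison (γ : ℝ → Y) : Prop :=
  ∀ z : Y, ∀ t ∈ Icc (0:ℝ) 1,
    dist z (γ t) ^ 2 ≤ (1 - t) * dist z (γ 0) ^ 2 + t * dist z (γ 1) ^ 2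
      - (1 - t) * t * dist (γ 0) (γ 1) ^ 2

variable (Y) in
def IsNPCSpace : Prop :=
  ∀ γ : ℝ → Y, IsConstSpeedGeodesic γ → NPCComparison γ

theorem IsConstSpeedGeodesic.dist_map_zero {γ : ℝ → Y} (hγ : IsConstSpeedGeodesic γ) {t : ℝ}
    (ht : t ∈ Icc (0:ℝ) 1) : dist (γ t) (γ 0) = t * dist (γ 0) (γ 1) := by
  rw [hγ t ht 0 (left_mem_Icc.2 zero_le_one), sub_zero, abs_of_nonneg ht.1]

theorem IsConstSpeedGeodesic.dist_map_one {γ : ℝ → Y} (hγ : IsConstSpeedGeodesic γ) {t : ℝ}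
    (ht : t ∈ Icc (0:ℝ) 1) : dist (γ t) (γ 1) = (1 - t) * dist (γ 0) (γ 1) := by
  rw [hγ t ht 1 (right_mem_Icc.2 zero_le_one), abs_of_nonpos (by linarith [ht.2]), neg_sub]

theorem IsConstSpeedGeodesic.congr {γ γ' : ℝ → Y} (hγ : IsConstSpeedGeodesic γ)
    (h : ∀ t ∈ Icc (0:ℝ) 1, γ t = γ' t) : IsConstSpeedGeodesic γ' := by
  intro s hs t ht
  rw [← h s hs, ← h t ht, ← h 0 (left_mem_Icc.2 zero_le_one), ← h 1 (right_mem_Icc.2 zero_le_one)]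
  exact hγ s hs t ht

theorem IsConstSpeedGeodesic.reverse {γ : ℝ → Y} (hγ : IsConstSpeedGeodesic γ) :
    IsConstSpeedGeodesic fun s => γ (1 - s) := by
  have hmem : ∀ u ∈ Icc (0:ℝ) 1, 1 - u ∈ Icc (0:ℝ) 1 := fun u hu =>
    ⟨by linarith [hu.2], by linarith [hu.1]⟩
  intro s hs t ht
  simp only [sub_zero, sub_self]
  rw [hγ _ (hmem s hs) _ (hmem t ht), dist_comm (γ 1), abs_sub_comm]
  ring_nf

/-- Adding the comparison inequality at `γ t` along `τ` to `t` times the one at `τ 1` along `γ`,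
all terms but `t² d(γ 1, τ 1)²` cancel. -/
theorem dist_le_mul_of_map_zero_eq (hnpc : IsNPCSpace Y) {γ τ : ℝ → Y}
    (hγ : IsConstSpeedGeodesic γ) (hτ : IsConstSpeedGeodesic τ) (h0 : γ 0 = τ 0) {t : ℝ}
    (ht : t ∈ Icc (0:ℝ) 1) : dist (γ t) (τ t) ≤ t * dist (γ 1) (τ 1) := by
  have hτt := hnpc τ hτ (γ t) t ht
  have hγ1 := hnpc γ hγ (τ 1) t ht
  rw [← h0, hγ.dist_map_zero ht] at hτt
  rw [dist_comm (τ 1) (γ t), dist_comm (τ 1) (γ 0), dist_comm (τ 1) (γ 1)] at hγ1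
  have hsq : dist (γ t) (τ t) ^ 2 ≤ (t * dist (γ 1) (τ 1)) ^ 2 := by nlinarith [ht.1, ht.2]
  exact (pow_le_pow_iff_left₀ dist_nonneg (mul_nonneg ht.1 dist_nonneg) two_ne_zero).1 hsq

theorem dist_le_of_isConstSpeedGeodesic (hgeo : IsGeodesicSpace Y) (hnpc : IsNPCSpace Y)
    {γ σ : ℝ → Y} (hγ : IsConstSpeedGeodesic γ) (hσ : IsConstSpeedGeodesic σ) {t : ℝ}
    (ht : t ∈ Icc (0:ℝ) 1) :
    dist (γ t) (σ t) ≤ (1 - t) * dist (γ 0) (σ 0) + t * dist (γ 1) (σ 1) := by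
  obtain ⟨τ, hτ0, hτ1, hτ⟩ := hgeo (γ 0) (σ 1)
  have hγτ := dist_le_mul_of_map_zero_eq hnpc hγ hτ hτ0.symm ht
  have hστ : dist (σ t) (τ t) ≤ (1 - t) * dist (σ 0) (τ 0) := by
    have h1t : 1 - t ∈ Icc (0:ℝ) 1 := ⟨by linarith [ht.2], by linarith [ht.1]⟩
    simpa only [_root_.sub_sub_cancel, sub_self] using
      dist_le_mul_of_map_zero_eq hnpc hσ.reverse hτ.reverse (by simp only [sub_zero, hτ1]) h1t
  rw [hτ1] at hγτ
  calc dist (γ t) (σ t) ≤ dist (γ t) (τ t) + dist (σ t) (τ t) := dist_triangle_right _ _ _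
    _ ≤ (1 - t) * dist (γ 0) (σ 0) + t * dist (γ 1) (σ 1) := by
      rw [hτ0, dist_comm (σ 0)] at hστ; linarith

theorem lipschitzWith_one_geodesic_selection (hgeo : IsGeodesicSpace Y) (hnpc : IsNPCSpace Y)
    {G : Y → Y → ℝ → Y} (hG0 : ∀ y y', G y y' 0 = y) (hG1 : ∀ y y', G y y' 1 = y')
    (hG : ∀ y y', IsConstSpeedGeodesic (G y y')) {t : ℝ} (ht : t ∈ Icc (0:ℝ) 1) :
    LipschitzWith 1 fun q : Y × Y => G q.1 q.2 t := by
  refine LipschitzWith.of_dist_le_mul fun q q' => ?_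
  have h := dist_le_of_isConstSpeedGeodesic hgeo hnpc (hG q.1 q.2) (hG q'.1 q'.2) ht
  rw [hG0, hG0, hG1, hG1] at h
  rw [NNReal.coe_one, one_mul, Prod.dist_eq]
  calc dist (G q.1 q.2 t) (G q'.1 q'.2 t) ≤ (1 - t) * dist q.1 q'.1 + t * dist q.2 q'.2 := h
    _ ≤ (1 - t) * max (dist q.1 q'.1) (dist q.2 q'.2) + t * max (dist q.1 q'.1) (dist q.2 q'.2) :=
        add_le_add (mul_le_mul_of_nonneg_left (le_max_left _ _) (by linarith [ht.2]))
          (mul_le_mul_of_nonneg_left (le_max_right _ _) ht.1)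
    _ = max (dist q.1 q'.1) (dist q.2 q'.2) := by ring

/-- The comparison inequality along `c` at `z = γ t` forces `d(γ t, c t) = 0` for any geodesic `γ`
with the endpoints of `c`. -/
theorem IsNPCSpace.of_forall_exists (hex : ∀ y y' : Y, ∃ c : ℝ → Y, c 0 = y ∧ c 1 = y' ∧
    IsConstSpeedGeodesic c ∧ NPCComparison c) : IsNPCSpace Y := by
  intro γ hγ z t ht
  obtain ⟨c, hc0, hc1, -, hc⟩ := hex (γ 0) (γ 1)
  have hγc : edist (γ t) (c t) = 0 := by
    have h := hc (γ t) t ht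
    rw [hc0, hc1, hγ.dist_map_zero ht, hγ.dist_map_one ht] at h
    rw [edist_dist, ENNReal.ofReal_eq_zero]
    nlinarith [sq_nonneg (dist (γ t) (c t))]
  rw [dist_edist, edist_congr_left hγc, ← dist_edist, ← hc0, ← hc1]
  exact hc z t ht

end Geometry

theorem sum_Ico_inv_two_pow_le (N n : ℕ) :
    ∑ i ∈ Finset.Ico N n, (2⁻¹ : ℝ≥0∞) ^ i ≤ 2 * 2⁻¹ ^ N := by
  rw [Finset.sum_Ico_eq_sum_range]
  calc ∑ k ∈ Finset.range (n - N), (2⁻¹ : ℝ≥0∞) ^ (N + k) ≤ ∑' k, (2⁻¹ : ℝ≥0∞) ^ (N + k) :=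
        ENNReal.sum_le_tsum _
    _ = 2 * 2⁻¹ ^ N := by
      simp_rw [pow_add, ENNReal.tsum_mul_left, ENNReal.tsum_geometric, ENNReal.one_sub_inv_two,
        inv_inv, mul_comm]

section Lebesgue

variable {μ : Measure α} {p : ℝ≥0∞}

theorem eLpNorm_sum_Ico_le_of_le_geometric {e : ℕ → α → ℝ}
    (he : ∀ n, AEStronglyMeasurable (e n) μ) (hp : 1 ≤ p)
    (hle : ∀ n, eLpNorm (e n) p μ ≤ 2⁻¹ ^ n) (N n : ℕ) :
    eLpNorm (∑ i ∈ Finset.Ico N n, e i) p μ ≤ 2 * 2⁻¹ ^ N :=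
  calc eLpNorm (∑ i ∈ Finset.Ico N n, e i) p μ ≤ ∑ i ∈ Finset.Ico N n, eLpNorm (e i) p μ :=
        eLpNorm_sum_le (fun i _ => he i) hp
    _ ≤ ∑ i ∈ Finset.Ico N n, 2⁻¹ ^ i := Finset.sum_le_sum fun i _ => hle i
    _ ≤ 2 * 2⁻¹ ^ N := sum_Ico_inv_two_pow_le N n

theorem ae_summable_of_eLpNorm_le_geometric {e : ℕ → α → ℝ}
    (he : ∀ n, AEStronglyMeasurable (e n) μ) (he0 : ∀ n x, 0 ≤ e n x) (hp : 1 ≤ p)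
    (hle : ∀ n, eLpNorm (e n) p μ ≤ 2⁻¹ ^ n) :
    ∀ᵐ x ∂μ, Summable fun n => e n x := by
  set S : ℕ → α → ℝ := fun m => ∑ i ∈ Finset.range m, e i with hS
  have hSm : ∀ m, AEStronglyMeasurable (S m) μ := fun m =>
    Finset.aestronglyMeasurable_sum _ fun i _ => he i
  have htail : ∀ N n, N ≤ n → eLpNorm (S n - S N) p μ ≤ 2 * 2⁻¹ ^ N := by
    intro N n hNn
    have hsub : S n - S N = ∑ i ∈ Finset.Ico N n, e i := by
      rw [Finset.sum_Ico_eq_sub _ hNn]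
    rw [hsub]
    exact eLpNorm_sum_Ico_le_of_le_geometric he hp hle N n
  have hcauchy : ∀ N n m, N ≤ n → N ≤ m → eLpNorm (S n - S m) p μ < 5 * 2⁻¹ ^ N := by
    intro N n m hn hm
    calc eLpNorm (S n - S m) p μ = eLpNorm ((S n - S N) - (S m - S N)) p μ := by
          rw [sub_sub_sub_cancel_right]
      _ ≤ eLpNorm (S n - S N) p μ + eLpNorm (S m - S N) p μ :=
          eLpNorm_sub_le ((hSm n).sub (hSm N)) ((hSm m).sub (hSm N)) hp
      _ ≤ 2 * 2⁻¹ ^ N + 2 * 2⁻¹ ^ N := add_le_add (htail N n hn) (htail N m hm)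
      _ < 5 * 2⁻¹ ^ N := by
        rw [← add_mul]
        exact ENNReal.mul_lt_mul_left (by simp) (by simp) (by norm_num)
  have hB : ∑' N, (5 : ℝ≥0∞) * 2⁻¹ ^ N ≠ ∞ := by
    rw [ENNReal.tsum_mul_left, ENNReal.tsum_geometric, ENNReal.one_sub_inv_two, inv_inv]
    exact ENNReal.mul_ne_top (by simp) (by simp)
  filter_upwards [Lp.ae_tendsto_of_cauchy_eLpNorm hSm hp hB hcauchy] with x ⟨l, hl⟩
  have hl' : Tendsto (fun m => ∑ i ∈ Finset.range m, e i x) atTop (𝓝 l) := by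
    simpa only [hS, Finset.sum_apply] using hl
  exact ((hasSum_iff_tendsto_nat_of_nonneg (fun n => he0 n x) l).2 hl').summable

theorem ae_cauchySeq_of_eLpNorm_dist_le_geometric {Y : Type*} [PseudoMetricSpace Y]
    {u : ℕ → α → Y} (hu : ∀ n, AEStronglyMeasurable (u n) μ) (hp : 1 ≤ p)
    (hle : ∀ n, eLpNorm (fun x => dist (u n x) (u (n + 1) x)) p μ ≤ 2⁻¹ ^ n) :
    ∀ᵐ x ∂μ, CauchySeq fun n => u n x :=
  (ae_summable_of_eLpNorm_le_geometric (fun n => (hu n).dist (hu (n + 1)))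
    (fun _ _ => dist_nonneg) hp hle).mono fun _ hx => cauchySeq_of_summable_dist hx

theorem Dp_le_liminf_of_ae_tendsto {Y : Type*} [MetricSpace Y] {g f : α → Y} {u : ℕ → α → Y}
    (hg : AEStronglyMeasurable g μ) (hu : ∀ n, AEStronglyMeasurable (u n) μ)
    (hf : ∀ᵐ x ∂μ, Tendsto (fun n => u n x) atTop (𝓝 (f x))) :
    Dp μ p g f ≤ liminf (fun n => Dp μ p g (u n)) atTop :=
  Lp.eLpNorm_lim_le_liminf_eLpNorm (fun n => hg.dist (hu n)) _
    (hf.mono fun _ hx => tendsto_const_nhds.dist hx)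

theorem Dp_pointwise_geodesic {Y : Type*} [MetricSpace Y] {c : ℝ → α → Y}
    (hc : ∀ x, IsConstSpeedGeodesic fun t => c t x) {s t : ℝ} (hs : s ∈ Icc (0:ℝ) 1)
    (ht : t ∈ Icc (0:ℝ) 1) :
    Dp μ p (c s) (c t) = ENNReal.ofReal |s - t| * Dp μ p (c 0) (c 1) := by
  have hpt : (fun x => dist (c s x) (c t x)) = |s - t| • fun x => dist (c 0 x) (c 1 x) :=
    funext fun x => hc x s hs t ht
  rw [Dp, hpt, eLpNorm_const_smul, Real.enorm_eq_ofReal_abs, abs_abs, Dp]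

end Lebesgue

theorem SM.stronglyMeasurable {f : α → N} (hf : SM f) : StronglyMeasurable f :=
  stronglyMeasurable_iff_measurable_separable.2 hf

theorem SM.of_stronglyMeasurable {f : α → N} (hf : StronglyMeasurable f) : SM f :=
  ⟨hf.measurable, hf.isSeparable_range⟩

theorem SM.comp₂ {Φ : N → N → N} (hΦ : Continuous fun q : N × N => Φ q.1 q.2) {f g : α → N}
    (hf : SM f) (hg : SM g) : SM fun x => Φ (f x) (g x) :=
  .of_stronglyMeasurable <|
    hΦ.comp_stronglyMeasurable (hf.stronglyMeasurable.prodMk hg.stronglyMeasurable)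

namespace NLp

variable {μ : Measure α} {h : α → N} {hh : SM h} {p : ℝ≥0∞} [Fact (1 ≤ p)]

def ofDpNeTop (F : NLp μ h hh p) (f : α → N) (hf : SM f) (hfF : Dp μ p f F.1 ≠ ∞) :
    NLp μ h hh p :=
  ⟨f, hf, ne_top_of_le_ne_top (ENNReal.add_ne_top.2 ⟨hfF, F.2.2⟩)
    (Dp_triangle Fact.out (hf.aesm μ) (F.2.1.aesm μ) (hh.aesm μ))⟩

theorem completeSpace [CompleteSpace N] : CompleteSpace (NLp μ h hh p) := by
  refine EMetric.complete_of_convergent_controlled_sequences (fun n => 2⁻¹ ^ n)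
    (fun n => ENNReal.pow_pos (by norm_num) n) fun u hu => ?_
  have hum : ∀ n, AEStronglyMeasurable (u n).1 μ := fun n => (u n).2.1.aesm μ
  have hcauchy : ∀ᵐ x ∂μ, CauchySeq fun n => (u n).1 x :=
    ae_cauchySeq_of_eLpNorm_dist_le_geometric hum Fact.out fun n =>
      (hu n n (n + 1) le_rfl n.le_succ).le
  obtain ⟨f, hfm, hf⟩ := exists_stronglyMeasurable_limit_of_tendsto_ae hum
    (hcauchy.mono fun _ hx => cauchySeq_tendsto_of_complete hx)
  have hdist : ∀ n, Dp μ p (u n).1 f ≤ 2⁻¹ ^ n := fun n =>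
    (Dp_le_liminf_of_ae_tendsto (hum n) hum hf).trans <| liminf_le_of_frequently_le' <|
      ((eventually_ge_atTop n).mono fun m hm => (hu n n m le_rfl hm).le).frequently
  let F := ofDpNeTop (u 0) f (.of_stronglyMeasurable hfm)
    (by rw [Dp_comm]; exact ((hdist 0).trans_lt (by norm_num)).ne)
  refine ⟨F, tendsto_iff_edist_tendsto_0.2 ?_⟩
  exact tendsto_of_tendsto_of_tendsto_of_le_of_le tendsto_const_nhds
    (ENNReal.tendsto_pow_atTop_nhds_zero_of_lt_one (by norm_num)) (fun _ => bot_le) hdist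

theorem exists_pointwise_geodesic (hgeo : IsGeodesicSpace N) (hnpc : IsNPCSpace N)
    (F F' : NLp μ h hh p) :
    ∃ c : ℝ → NLp μ h hh p, c 0 = F ∧ c 1 = F' ∧ ∀ x, IsConstSpeedGeodesic fun t => (c t).1 x := by
  choose G hG0 hG1 hG using id hgeo
  -- the selection is only known to be continuous in its endpoints for times in `[0, 1]`
  let π : ℝ → ℝ := fun t => projIcc (0:ℝ) 1 zero_le_one t
  have hπ : ∀ t ∈ Icc (0:ℝ) 1, π t = t := fun t ht => by simp [π, projIcc_of_mem _ ht]
  let γ : ℝ → α → N := fun t x => G (F.1 x) (F'.1 x) t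
  have hγ : ∀ x, IsConstSpeedGeodesic fun t => γ t x := fun x => hG _ _
  have hγ0 : γ 0 = F.1 := funext fun x => hG0 _ _
  have hγ1 : γ 1 = F'.1 := funext fun x => hG1 _ _
  have hsm : ∀ t, SM (γ (π t)) := fun t =>
    .comp₂ (Φ := fun y y' => G y y' (π t))
      (lipschitzWith_one_geodesic_selection hgeo hnpc hG0 hG1 hG
        (projIcc (0:ℝ) 1 zero_le_one t).2).continuous F.2.1 F'.2.1
  have hfin : ∀ t, Dp μ p (γ (π t)) F.1 ≠ ∞ := fun t => by
    rw [← hγ0, Dp_pointwise_geodesic hγ (projIcc (0:ℝ) 1 zero_le_one t).2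
      (left_mem_Icc.2 zero_le_one), hγ0, hγ1]
    exact ENNReal.mul_ne_top ENNReal.ofReal_ne_top (dp_ne_top Fact.out F F')
  refine ⟨fun t => ofDpNeTop F (γ (π t)) (hsm t) (hfin t), ?_, ?_, fun x => ?_⟩
  · exact Subtype.ext (by simp only [ofDpNeTop, hπ 0 (left_mem_Icc.2 zero_le_one), hγ0])
  · exact Subtype.ext (by simp only [ofDpNeTop, hπ 1 (right_mem_Icc.2 zero_le_one), hγ1])
  · exact (hγ x).congr fun t ht => by simp only [ofDpNeTop, hπ t ht]

theorem isConstSpeedGeodesic_of_pointwise {c : ℝ → NLp μ h hh p}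
    (hc : ∀ x, IsConstSpeedGeodesic fun t => (c t).1 x) : IsConstSpeedGeodesic c := by
  intro s hs t ht
  rw [dist_def, dist_def, Dp_pointwise_geodesic (c := fun t => (c t).1) hc hs ht,
    ENNReal.toReal_mul, ENNReal.toReal_ofReal (abs_nonneg _)]

theorem memLp_dist (F G : NLp μ h hh p) : MemLp (fun x => dist (F.1 x) (G.1 x)) p μ :=
  ⟨(F.2.1.aesm μ).dist (G.2.1.aesm μ), (dp_ne_top Fact.out F G).lt_top⟩

theorem integrable_dist_sq (F G : NLp μ h hh 2) :
    Integrable (fun x => dist (F.1 x) (G.1 x) ^ 2) μ :=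
  (memLp_dist F G).integrable_sq

theorem dist_sq_eq_integral (F G : NLp μ h hh 2) :
    dist F G ^ 2 = ∫ x, dist (F.1 x) (G.1 x) ^ 2 ∂μ := by
  rw [dist_def, Dp, (memLp_dist F G).eLpNorm_eq_integral_rpow_norm two_ne_zero ofNat_ne_top,
    ENNReal.toReal_ofReal (by positivity), ENNReal.toReal_ofNat, ← one_div, ← Real.sqrt_eq_rpow,
    Real.sq_sqrt (integral_nonneg fun _ => by positivity)]
  simp_rw [Real.norm_of_nonneg dist_nonneg, Real.rpow_two]

theorem npcComparison_of_pointwise (hnpc : IsNPCSpace N) {c : ℝ → NLp μ h hh 2}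
    (hc : ∀ x, IsConstSpeedGeodesic fun t => (c t).1 x) : NPCComparison c := by
  intro Z t ht
  have hZ0 := (integrable_dist_sq Z (c 0)).const_mul (1 - t)
  have hZ1 := (integrable_dist_sq Z (c 1)).const_mul t
  have h01 := (integrable_dist_sq (c 0) (c 1)).const_mul ((1 - t) * t)
  simp only [dist_sq_eq_integral]
  rw [← integral_const_mul, ← integral_const_mul, ← integral_const_mul,
    ← integral_add hZ0 hZ1, ← integral_sub (hZ0.fun_add hZ1) h01]
  exact integral_mono (integrable_dist_sq _ _) ((hZ0.add hZ1).sub h01)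
    fun x => hnpc _ (hc x) (Z.1 x) t ht

end NLp

/-- If `N` is a complete geodesic metric space which is globally nonpositively curved
(NPC, i.e. satisfies the comparison inequality along every constant speed geodesic), then
so is `(L²_h(M,N), D₂)`: it is complete, geodesic, and satisfies the global NPC comparison
inequality.  (No separability of `N` is required.) -/
theorem stmt17 {α : Type*} [MeasurableSpace α] {N : Type*} [MetricSpace N]
    [MeasurableSpace N] [BorelSpace N] [CompleteSpace N]
    (μ : Measure α) (h : α → N) (hh : SM h)
    (hgeoN : ∀ y y' : N, ∃ γ : ℝ → N, γ 0 = y ∧ γ 1 = y' ∧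
      ∀ s ∈ Set.Icc (0:ℝ) 1, ∀ t ∈ Set.Icc (0:ℝ) 1,
        dist (γ s) (γ t) = |s - t| * dist y y')
    (hnpcN : ∀ γ : ℝ → N,
      (∀ s ∈ Set.Icc (0:ℝ) 1, ∀ t ∈ Set.Icc (0:ℝ) 1,
        dist (γ s) (γ t) = |s - t| * dist (γ 0) (γ 1)) →
      ∀ z : N, ∀ t ∈ Set.Icc (0:ℝ) 1,
        dist z (γ t) ^ 2 ≤ (1 - t) * dist z (γ 0) ^ 2 + t * dist z (γ 1) ^ 2
          - (1 - t) * t * dist (γ 0) (γ 1) ^ 2) :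
    CompleteSpace (NLp μ h hh 2) ∧
    (∀ F F' : NLp μ h hh 2, ∃ c : ℝ → NLp μ h hh 2, c 0 = F ∧ c 1 = F' ∧
      ∀ s ∈ Set.Icc (0:ℝ) 1, ∀ t ∈ Set.Icc (0:ℝ) 1,
        dist (c s) (c t) = |s - t| * dist F F') ∧
    (∀ c : ℝ → NLp μ h hh 2,
      (∀ s ∈ Set.Icc (0:ℝ) 1, ∀ t ∈ Set.Icc (0:ℝ) 1,
        dist (c s) (c t) = |s - t| * dist (c 0) (c 1)) →
      ∀ F : NLp μ h hh 2, ∀ t ∈ Set.Icc (0:ℝ) 1,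
        dist F (c t) ^ 2 ≤ (1 - t) * dist F (c 0) ^ 2 + t * dist F (c 1) ^ 2
          - (1 - t) * t * dist (c 0) (c 1) ^ 2) := by
  have hgeo : IsGeodesicSpace N := fun y y' => by
    obtain ⟨γ, rfl, rfl, hγ⟩ := hgeoN y y'
    exact ⟨γ, rfl, rfl, hγ⟩
  have hnpc : IsNPCSpace N := hnpcN
  have hpath : ∀ F F' : NLp μ h hh 2, ∃ c : ℝ → NLp μ h hh 2,
      c 0 = F ∧ c 1 = F' ∧ IsConstSpeedGeodesic c ∧ NPCComparison c := fun F F' => by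
    obtain ⟨c, hc0, hc1, hc⟩ := NLp.exists_pointwise_geodesic hgeo hnpc F F'
    exact ⟨c, hc0, hc1, NLp.isConstSpeedGeodesic_of_pointwise hc,
      NLp.npcComparison_of_pointwise hnpc hc⟩
  refine ⟨NLp.completeSpace, fun F F' => ?_, IsNPCSpace.of_forall_exists hpath⟩
  obtain ⟨c, rfl, rfl, hc, -⟩ := hpath F F'
  exact ⟨c, rfl, rfl, hc⟩

end NLS
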